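/- Let S ⊆ V be a seed set, let θ* be any distribution attaining the minimum of E_θ[R(c̃, S)] over θ ∈ Θ, and let i ∈ V \ S be a node with max_{γ ∈ Γ(S, i)} L(γ) > 0. Then for every maximizing path γ ∈ argmax_{γ ∈ Γ(S, i)} L(γ), the θ*-probability of the event that at least two edges of γ are missing from the random scenario is zero; i.e., almost surely at most one arc of γ is missing. -/

import Mathlib

/-!
For every `θ ∈ Θ` and every path `γ` from `S` to `j`, the indicator that all edges of `γ` are live
is at least `1 - #(missing edges of γ) + 1[two edges of γ missing]`, and the expected number of
missing edges of `γ` is `1 - L(γ)`. Hence `P_θ(j influenced) ≥ L(γ) + P_θ(two edges of γ missing)`,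
and in particular `P_θ(j influenced) ≥ π*_j` (read `π*_j = 1` for seeds).

Conversely, a single uniform level `u ∈ [0, 1)` can drive all edges at once: edge `(a, b)` is
missing when `u` falls in an interval of length `1 - p(a, b)` ending at `π*_a`. In the resulting
scenario a node `j` is influenced only when `u < π*_j`, so `min_θ E_θ[R] ≤ Σ_j π*_j`.

For the minimiser `θ*`, summing the lower bounds over all nodes, with `π*_i = L(γ)` and the extra
term `P_θ*(two edges of γ missing)` at `i`, shows that this extra term vanishes.
-/

set_option linter.unusedSectionVars false

open scoped BigOperators

namespace CorrIM

variable {V : Type*} [Fintype V] [DecidableEq V]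

/-- A node `i` is influenced: `i ∈ S`, or `i` is reachable from some node of `S`
along the live edges of the scenario `c`. -/
def influenced (c : Finset (V × V)) (S : Finset V) (i : V) : Prop :=
  ∃ s ∈ S, Relation.ReflTransGen (fun a b : V => (a, b) ∈ c) s i

/-- `R c S` : the number of influenced nodes in scenario `c` with seed set `S`. -/
noncomputable def R (c : Finset (V × V)) (S : Finset V) : ℕ :=
  Set.ncard {i : V | influenced c S i}

/-- The Fréchet class `Θ` : probability distributions on scenarios (subsets of `E`)
whose marginals agree with the edge likelihoods `p`. -/
def memTheta (E : Finset (V × V)) (p : V × V → ℝ) (θ : Finset (V × V) → ℝ) : Prop :=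
  (∀ c, 0 ≤ θ c) ∧ (∀ c, θ c ≠ 0 → c ⊆ E) ∧ (∑ c : Finset (V × V), θ c) = 1 ∧
    ∀ e ∈ E, (∑ c : Finset (V × V), if e ∈ c then θ c else 0) = p e

/-- Expected number of influenced nodes under the distribution `θ`. -/
noncomputable def expInf (θ : Finset (V × V) → ℝ) (S : Finset V) : ℝ :=
  ∑ c : Finset (V × V), θ c * (R c S : ℝ)

/-- The correlation robust influence function `f^corr`. -/
noncomputable def fcorr (E : Finset (V × V)) (p : V × V → ℝ) (S : Finset V) : ℝ :=
  sInf {x : ℝ | ∃ θ, memTheta E p θ ∧ x = expInf θ S}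

open Classical in
/-- Probability of the event `A` under the distribution `θ`. -/
noncomputable def prob (θ : Finset (V × V) → ℝ) (A : Finset (V × V) → Prop) : ℝ :=
  ∑ c : Finset (V × V), if A c then θ c else 0

/-- `γ` (a list of nodes `i₀, i₁, …, i_λ`, `λ ≥ 1`) is a directed path from the
seed set `S` to the node `i` using edges of `E`. -/
def IsPathFrom (E : Finset (V × V)) (S : Finset V) (i : V) (γ : List V) : Prop :=
  2 ≤ γ.length ∧ (∃ s ∈ S, γ.head? = some s) ∧ γ.getLast? = some i ∧
    γ.Chain' (fun a b : V => (a, b) ∈ E)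

/-- The list of edges `(i₀,i₁), …, (i_{λ-1}, i_λ)` of a path `γ = [i₀, …, i_λ]`. -/
def pathEdges (γ : List V) : List (V × V) := γ.zip γ.tail

/-- The weight `L(γ) = 1 - ∑_{l=1}^{λ} (1 - p(i_{l-1}, i_l))` of a path. -/
noncomputable def L (p : V × V → ℝ) (γ : List V) : ℝ :=
  1 - ((pathEdges γ).map (fun e => 1 - p e)).sum

/-- `π*_i = max(0, max_{γ ∈ Γ(S,i)} L(γ))`, with value `0` when `Γ(S,i) = ∅`. -/
noncomputable def piStar (E : Finset (V × V)) (p : V × V → ℝ) (S : Finset V) (i : V) : ℝ :=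
  sSup (insert 0 {x : ℝ | ∃ γ : List V, IsPathFrom E S i γ ∧ x = L p γ})

/-- The independent cascade distribution `θ_ic` : each edge of `E` is live
independently with probability `p e`. -/
noncomputable def thetaIC (E : Finset (V × V)) (p : V × V → ℝ) (c : Finset (V × V)) : ℝ :=
  if c ⊆ E then (∏ e ∈ c, p e) * ∏ e ∈ E \ c, (1 - p e) else 0

/-- The independent cascade influence function `f^ic`. -/
noncomputable def fic (E : Finset (V × V)) (p : V × V → ℝ) (S : Finset V) : ℝ :=
  expInf (thetaIC E p) S

section Paths

variable {E : Finset (V × V)} {S : Finset V} {a b j : V} {γ : List V}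

theorem pathEdges_cons_cons (a b : V) (l : List V) :
    pathEdges (a :: b :: l) = (a, b) :: pathEdges (b :: l) := rfl

theorem isChain_iff_forall_mem_pathEdges (r : V → V → Prop) :
    ∀ γ : List V, γ.IsChain r ↔ ∀ e ∈ pathEdges γ, r e.1 e.2
  | [] | [_] => by simp [pathEdges]
  | a :: b :: l => by
    simp [List.isChain_cons_cons, pathEdges_cons_cons, isChain_iff_forall_mem_pathEdges r (b :: l)]

theorem pathEdges_append_singleton {a : V} (b : V) :
    ∀ {γ : List V}, γ.getLast? = some a → pathEdges (γ ++ [b]) = pathEdges γ ++ [(a, b)]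
  | [_], h => by simp_all [pathEdges]
  | _ :: c :: l, h => by
    rw [List.getLast?_cons_cons] at h
    rw [List.cons_append, List.cons_append, pathEdges_cons_cons, ← List.cons_append,
      pathEdges_append_singleton b h, pathEdges_cons_cons, List.cons_append]

theorem L_append_singleton (p : V × V → ℝ) {γ : List V} {a : V} (b : V)
    (h : γ.getLast? = some a) : L p (γ ++ [b]) = L p γ - (1 - p (a, b)) := by
  simp only [L, pathEdges_append_singleton b h, List.map_append, List.sum_append]
  simp; ring

theorem L_pair (p : V × V → ℝ) (a b : V) : L p [a, b] = p (a, b) := by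
  simp [L, pathEdges]

theorem IsPathFrom.mem_of_mem_pathEdges (hγ : IsPathFrom E S j γ) {e : V × V}
    (he : e ∈ pathEdges γ) : e ∈ E :=
  (isChain_iff_forall_mem_pathEdges _ γ).1 hγ.2.2.2 e he

theorem IsPathFrom.influenced (hγ : IsPathFrom E S j γ) {c : Finset (V × V)}
    (hc : ∀ e ∈ pathEdges γ, e ∈ c) : influenced c S j := by
  obtain ⟨hlen, ⟨s, hs, hhead⟩, hlast, -⟩ := hγ
  refine ⟨s, hs, ?_⟩
  have hne : γ ≠ [] := List.ne_nil_of_length_pos (by omega)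
  have := List.relationReflTransGen_of_exists_isChain γ
    ((isChain_iff_forall_mem_pathEdges (fun x y => (x, y) ∈ c) γ).2 hc) hne
  rwa [(List.head_eq_iff_head?_eq_some hne).2 hhead,
    (List.getLast_eq_iff_getLast?_eq_some hne).2 hlast] at this

theorem IsPathFrom.append_singleton (hγ : IsPathFrom E S a γ) (he : (a, b) ∈ E) :
    IsPathFrom E S b (γ ++ [b]) := by
  obtain ⟨hlen, ⟨s, hs, hhead⟩, hlast, hchain⟩ := hγ
  refine ⟨by simp; omega, ⟨s, hs, ?_⟩, by simp, ?_⟩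
  · rwa [List.head?_append_of_ne_nil _ (List.ne_nil_of_length_pos (by omega))]
  · exact hchain.append (List.isChain_singleton _) (by simp_all)

theorem isPathFrom_pair (ha : a ∈ S) (he : (a, b) ∈ E) : IsPathFrom E S b [a, b] :=
  ⟨le_rfl, ⟨a, ha, rfl⟩, rfl, List.isChain_pair.2 he⟩

theorem L_le_one {p : V × V → ℝ} (hp : ∀ e ∈ E, p e ≤ 1) (hγ : IsPathFrom E S j γ) :
    L p γ ≤ 1 := by
  have : 0 ≤ ((pathEdges γ).map fun e => 1 - p e).sum := List.sum_nonneg fun x hx => by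
    obtain ⟨e, he, rfl⟩ := List.mem_map.1 hx
    linarith [hp e (hγ.mem_of_mem_pathEdges he)]
  unfold L; linarith

end Paths

section Potential

variable {E : Finset (V × V)} {p : V × V → ℝ} {S : Finset V} {a b j : V} {γ : List V}

theorem bddAbove_pathWeights (hp : ∀ e ∈ E, p e ≤ 1) (S : Finset V) (j : V) :
    BddAbove {x : ℝ | ∃ γ : List V, IsPathFrom E S j γ ∧ x = L p γ} :=
  ⟨1, by rintro x ⟨γ, hγ, rfl⟩; exact L_le_one hp hγ⟩

theorem bddAbove_insert_zero_pathWeights (hp : ∀ e ∈ E, p e ≤ 1) (S : Finset V)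
    (j : V) : BddAbove (insert 0 {x : ℝ | ∃ γ : List V, IsPathFrom E S j γ ∧ x = L p γ}) :=
  (bddAbove_pathWeights hp S j).insert 0

theorem piStar_nonneg (hp : ∀ e ∈ E, p e ≤ 1) : 0 ≤ piStar E p S j :=
  le_csSup (bddAbove_insert_zero_pathWeights hp S j) (Set.mem_insert _ _)

theorem le_piStar (hp : ∀ e ∈ E, p e ≤ 1) (hγ : IsPathFrom E S j γ) :
    L p γ ≤ piStar E p S j :=
  le_csSup (bddAbove_insert_zero_pathWeights hp S j) (Set.mem_insert_of_mem _ ⟨γ, hγ, rfl⟩)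

theorem piStar_le {y : ℝ} (h0 : 0 ≤ y) (h : ∀ γ, IsPathFrom E S j γ → L p γ ≤ y) :
    piStar E p S j ≤ y :=
  csSup_le ⟨0, Set.mem_insert _ _⟩ (by rintro x (rfl | ⟨γ, hγ, rfl⟩) <;> aesop)

theorem piStar_le_one (hp : ∀ e ∈ E, p e ≤ 1) : piStar E p S j ≤ 1 :=
  piStar_le zero_le_one fun _ hγ => L_le_one hp hγ

variable (E p S) in
/-- The paper's `π*`, extended by `1` on the seeds. -/
noncomputable def potential (j : V) : ℝ := if j ∈ S then 1 else piStar E p S j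

theorem potential_of_mem (hj : j ∈ S) : potential E p S j = 1 := if_pos hj

theorem potential_of_not_mem (hj : j ∉ S) : potential E p S j = piStar E p S j := if_neg hj

theorem potential_nonneg (hp : ∀ e ∈ E, p e ≤ 1) : 0 ≤ potential E p S j := by
  unfold potential; split_ifs
  exacts [zero_le_one, piStar_nonneg hp]

theorem potential_le_one (hp : ∀ e ∈ E, p e ≤ 1) : potential E p S j ≤ 1 := by
  unfold potential; split_ifs
  exacts [le_rfl, piStar_le_one hp]

theorem potential_sub_le (hp : ∀ e ∈ E, p e ≤ 1) (he : (a, b) ∈ E) :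
    potential E p S a - (1 - p (a, b)) ≤ potential E p S b := by
  have hpe := hp _ he
  by_cases hb : b ∈ S
  · linarith [potential_of_mem (E := E) (p := p) hb, potential_le_one (S := S) (j := a) hp]
  rw [potential_of_not_mem hb]
  by_cases ha : a ∈ S
  · rw [potential_of_mem ha]
    linarith [le_piStar hp (isPathFrom_pair ha he), L_pair p a b]
  rw [potential_of_not_mem ha, sub_le_iff_le_add]
  refine piStar_le (by linarith [piStar_nonneg hp (S := S) (j := b)]) fun γ hγ => ?_
  have := le_piStar hp (hγ.append_singleton he)
  rw [L_append_singleton p b hγ.2.2.1] at this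
  linarith

end Potential

def TwoMissing {α : Type*} (l : List α) (s : Finset α) : Prop :=
  ∃ e₁ ∈ l, ∃ e₂ ∈ l, e₁ ≠ e₂ ∧ e₁ ∉ s ∧ e₂ ∉ s

theorem one_add_ite_twoMissing_le {α : Type*} [DecidableEq α] (l : List α) (s : Finset α)
    [Decidable (TwoMissing l s)] [Decidable (∀ e ∈ l, e ∈ s)] :
    1 + (if TwoMissing l s then 1 else 0) ≤
      (if ∀ e ∈ l, e ∈ s then 1 else 0) + l.countP (· ∉ s) := by
  by_cases hall : ∀ e ∈ l, e ∈ s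
  · have : ¬ TwoMissing l s := fun ⟨e, he, _, _, _, hes, _⟩ => hes (hall e he)
    rw [if_pos hall, if_neg this]
    omega
  rw [if_neg hall, zero_add]
  split_ifs with htwo
  · obtain ⟨e₁, he₁, e₂, he₂, hne, he₁s, he₂s⟩ := htwo
    calc 1 + 1 = ({e₁, e₂} : Finset α).card := (Finset.card_pair hne).symm
      _ ≤ (l.filter (· ∉ s)).toFinset.card :=
        Finset.card_le_card (by simp [Finset.insert_subset_iff, *])
      _ ≤ l.countP (· ∉ s) := by rw [List.countP_eq_length_filter]; exact List.toFinset_card_le _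
  · push Not at hall
    simpa [List.countP_pos_iff] using hall

section Prob

variable {θ : Finset (V × V) → ℝ}

theorem prob_eq_sum_ite (A : Finset (V × V) → Prop) [DecidablePred A] :
    prob θ A = ∑ c, if A c then θ c else 0 := by
  unfold prob; congr!

theorem prob_eq_sum_mul (A : Finset (V × V) → Prop) [DecidablePred A] :
    prob θ A = ∑ c, θ c * if A c then 1 else 0 := by
  simp [prob_eq_sum_ite]

theorem prob_nonneg (hθ : ∀ c, 0 ≤ θ c) (A : Finset (V × V) → Prop) : 0 ≤ prob θ A :=
  Finset.sum_nonneg fun c _ => by split_ifs <;> simp [hθ c]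

theorem prob_mono (hθ : ∀ c, 0 ≤ θ c) {A B : Finset (V × V) → Prop} (h : ∀ c, A c → B c) :
    prob θ A ≤ prob θ B :=
  Finset.sum_le_sum fun c _ => by
    by_cases hA : A c
    · simp [hA, h c hA]
    · by_cases hB : B c <;> simp [hA, hB, hθ c]

theorem prob_true : prob θ (fun _ => True) = ∑ c, θ c := by
  simp [prob]

theorem prob_add_prob_not (A : Finset (V × V) → Prop) :
    prob θ A + prob θ (fun c => ¬ A c) = ∑ c, θ c := by
  classical
  simp only [prob_eq_sum_ite, ← Finset.sum_add_distrib]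
  exact Finset.sum_congr rfl fun c _ => by split_ifs <;> simp

theorem sum_mul_countP_not_mem (l : List (V × V)) :
    ∑ c, θ c * (l.countP (· ∉ c) : ℝ) = (l.map fun e => prob θ (fun c => e ∉ c)).sum := by
  induction l with
  | nil => simp
  | cons e l ih =>
    rw [List.map_cons, List.sum_cons, ← ih, prob_eq_sum_mul, ← Finset.sum_add_distrib]
    refine Finset.sum_congr rfl fun c _ => ?_
    simp only [List.countP_cons, decide_eq_true_eq]
    push_cast
    ring

end Prob

section

variable {E : Finset (V × V)} {p : V × V → ℝ} {θ : Finset (V × V) → ℝ}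

theorem memTheta.prob_not_mem (hθ : memTheta E p θ) {e : V × V} (he : e ∈ E) :
    prob θ (fun c => e ∉ c) = 1 - p e := by
  have hmem : prob θ (fun c => e ∈ c) = p e := by rw [prob_eq_sum_ite, hθ.2.2.2 e he]
  linarith [prob_add_prob_not (θ := θ) (fun c => e ∈ c), hθ.2.2.1]

theorem memTheta.prob_influenced_of_mem (hθ : memTheta E p θ) {S : Finset V} {j : V}
    (hj : j ∈ S) : prob θ (fun c => influenced c S j) = 1 := by
  rw [← hθ.2.2.1, ← prob_true]
  congr! with c
  exact iff_true_intro ⟨j, hj, .refl⟩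

theorem memTheta.L_add_prob_twoMissing_le (hθ : memTheta E p θ) {S : Finset V} {j : V}
    {γ : List V} (hγ : IsPathFrom E S j γ) :
    L p γ + prob θ (TwoMissing (pathEdges γ)) ≤ prob θ (fun c => influenced c S j) := by
  classical
  set l := pathEdges γ
  have hcount : ∑ c, θ c * (l.countP (· ∉ c) : ℝ) = 1 - L p γ := by
    rw [sum_mul_countP_not_mem, L, sub_sub_cancel]
    exact congrArg List.sum <| List.map_congr_left fun e he =>
      hθ.prob_not_mem (hγ.mem_of_mem_pathEdges he)
  calc L p γ + prob θ (TwoMissing l)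
      = ∑ c, θ c * (1 + (if TwoMissing l c then 1 else 0) - (l.countP (· ∉ c) : ℝ)) := by
        simp only [mul_sub, mul_add, Finset.sum_sub_distrib, Finset.sum_add_distrib, hcount,
          mul_one, hθ.2.2.1, prob_eq_sum_mul]
        ring
    _ ≤ ∑ c, θ c * if ∀ e ∈ l, e ∈ c then 1 else 0 := by
        refine Finset.sum_le_sum fun c _ => mul_le_mul_of_nonneg_left ?_ (hθ.1 c)
        rw [sub_le_iff_le_add]
        exact_mod_cast one_add_ite_twoMissing_le l c
    _ = prob θ (fun c => ∀ e ∈ l, e ∈ c) := (prob_eq_sum_mul _).symm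
    _ ≤ prob θ (fun c => influenced c S j) := prob_mono hθ.1 fun c hc => hγ.influenced hc

theorem memTheta.potential_le_prob (hθ : memTheta E p θ) (S : Finset V) (j : V) :
    potential E p S j ≤ prob θ (fun c => influenced c S j) := by
  by_cases hj : j ∈ S
  · rw [potential_of_mem hj, hθ.prob_influenced_of_mem hj]
  rw [potential_of_not_mem hj]
  refine piStar_le (prob_nonneg hθ.1 _) fun γ hγ => ?_
  linarith [hθ.L_add_prob_twoMissing_le hγ, prob_nonneg hθ.1 (TwoMissing (pathEdges γ))]

end

theorem expInf_eq_sum_prob (θ : Finset (V × V) → ℝ) (S : Finset V) :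
    expInf θ S = ∑ j, prob θ (fun c => influenced c S j) := by
  classical
  have hR : ∀ c, (R c S : ℝ) = ∑ j, if influenced c S j then 1 else 0 := fun c => by
    rw [Finset.sum_boole, R, Set.ncard_eq_toFinset_card']
    simp
  simp only [expInf, hR, Finset.mul_sum, prob_eq_sum_mul]
  exact Finset.sum_comm

open MeasureTheory

noncomputable def levelMeasure : Measure ℝ := volume.restrict (Set.Ico 0 1)

instance : IsProbabilityMeasure levelMeasure := ⟨by simp [levelMeasure]⟩

theorem prob_measure_preimage {X : Type*} [MeasurableSpace X] (μ : Measure X)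
    [IsFiniteMeasure μ] {f : X → Finset (V × V)} (hf : ∀ c, MeasurableSet (f ⁻¹' {c}))
    (A : Finset (V × V) → Prop) :
    prob (fun c => (μ (f ⁻¹' {c})).toReal) A = (μ {x | A (f x)}).toReal := by
  classical
  have hunion : {x | A (f x)} = ⋃ c ∈ Finset.univ.filter A, f ⁻¹' {c} := by ext; simp
  rw [prob_eq_sum_ite, ← Finset.sum_filter, hunion,
    measure_biUnion_finset (fun c _ c' _ hne => Set.disjoint_singleton.2 hne |>.preimage f)
      fun c _ => hf c,
    ENNReal.toReal_sum fun c _ => measure_ne_top μ _]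

section Coupling

variable (E : Finset (V × V)) (p : V × V → ℝ) (S : Finset V)

/-- Edge `e = (a, b)` is missing at level `u` iff `u` lies in this interval of length `1 - p e`,
which ends at `potential a` unless `potential a < 1 - p e`. -/
def missingInterval (e : V × V) : Set ℝ :=
  Set.Ico (max 0 (potential E p S e.1 - (1 - p e))) (max (potential E p S e.1) (1 - p e))

open Classical in
noncomputable def scenarioAt (u : ℝ) : Finset (V × V) := {e ∈ E | u ∉ missingInterval E p S e}

theorem measurableSet_missingInterval (e : V × V) : MeasurableSet (missingInterval E p S e) :=
  measurableSet_Ico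

theorem mem_scenarioAt {u : ℝ} {e : V × V} :
    e ∈ scenarioAt E p S u ↔ e ∈ E ∧ u ∉ missingInterval E p S e := by
  simp [scenarioAt]

theorem scenarioAt_subset (u : ℝ) : scenarioAt E p S u ⊆ E := fun _ he =>
  ((mem_scenarioAt E p S).1 he).1

noncomputable def thetaLevel (c : Finset (V × V)) : ℝ :=
  (levelMeasure (scenarioAt E p S ⁻¹' {c})).toReal

theorem measurableSet_scenarioAt_preimage (c : Finset (V × V)) :
    MeasurableSet (scenarioAt E p S ⁻¹' {c}) := by
  have : scenarioAt E p S ⁻¹' {c} =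
      ⋂ e, {u | e ∈ E ∧ u ∉ missingInterval E p S e ↔ e ∈ c} := by
    ext u; simp [Finset.ext_iff, mem_scenarioAt]
  rw [this]
  exact MeasurableSet.iInter fun e => measurableSet_setOfPred.2 <| (measurable_const.and
    (measurable_mem.2 (measurableSet_missingInterval E p S e)).not).iff measurable_const

theorem prob_thetaLevel (A : Finset (V × V) → Prop) :
    prob (thetaLevel E p S) A = (levelMeasure {u | A (scenarioAt E p S u)}).toReal :=
  prob_measure_preimage levelMeasure (measurableSet_scenarioAt_preimage E p S) A

variable {E p S}

theorem levelMeasure_missingInterval (hp : ∀ e ∈ E, 0 ≤ p e ∧ p e ≤ 1) (e : V × V)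
    (he : e ∈ E) : levelMeasure (missingInterval E p S e) = ENNReal.ofReal (1 - p e) := by
  have h0 := potential_nonneg (S := S) (j := e.1) fun e he => (hp e he).2
  have h1 := potential_le_one (S := S) (j := e.1) fun e he => (hp e he).2
  have hpe := hp e he
  have hsub : missingInterval E p S e ⊆ Set.Ico 0 1 :=
    Set.Ico_subset_Ico (le_max_left _ _) (max_le h1 (by linarith))
  rw [levelMeasure, Measure.restrict_apply' measurableSet_Ico, Set.inter_eq_left.2 hsub,
    missingInterval, Real.volume_Ico]
  congr 1
  rcases le_total (potential E p S e.1) (1 - p e) with h | h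
  · rw [max_eq_right h, max_eq_left (by linarith)]; ring
  · rw [max_eq_left h, max_eq_right (by linarith)]; ring

theorem memTheta_thetaLevel (hp : ∀ e ∈ E, 0 ≤ p e ∧ p e ≤ 1) :
    memTheta E p (thetaLevel E p S) := by
  refine ⟨fun c => ENNReal.toReal_nonneg, fun c hc => ?_, ?_, fun e he => ?_⟩
  · by_contra hcE
    refine hc ?_
    have : scenarioAt E p S ⁻¹' {c} = ∅ :=
      Set.eq_empty_of_forall_notMem fun u hu => hcE (hu ▸ scenarioAt_subset E p S u)
    simp [thetaLevel, this]
  · rw [← prob_true, prob_thetaLevel]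
    simp
  · have : {u | e ∈ scenarioAt E p S u} = (missingInterval E p S e)ᶜ := by
      ext u; simp [mem_scenarioAt, he]
    rw [← prob_eq_sum_ite (fun c => e ∈ c), prob_thetaLevel, this,
      prob_compl_eq_one_sub (measurableSet_missingInterval E p S e),
      levelMeasure_missingInterval hp e he,
      ENNReal.toReal_sub_of_le (by simp; linarith [hp e he]) ENNReal.one_ne_top,
      ENNReal.toReal_ofReal (by linarith [hp e he]), ENNReal.toReal_one]
    ring

/-- If `(a, b)` is live at level `u < potential a`, then `u` lies below the missing interval of
`(a, b)`, whose start is at most `potential b`. -/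
theorem lt_potential_of_influenced (hp : ∀ e ∈ E, p e ≤ 1) {u : ℝ}
    (hu : u ∈ Set.Ico 0 1) {j : V} (hj : influenced (scenarioAt E p S u) S j) :
    u < potential E p S j := by
  obtain ⟨s, hs, hsj⟩ := hj
  induction hsj with
  | refl => rw [potential_of_mem hs]; exact hu.2
  | @tail a b _ hab ih =>
    obtain ⟨hE, hlive⟩ := (mem_scenarioAt E p S).1 hab
    have hstart : u < max 0 (potential E p S a - (1 - p (a, b))) := by
      by_contra h
      exact hlive ⟨not_lt.1 h, lt_max_of_lt_left ih⟩
    rcases lt_max_iff.1 hstart with h | h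
    · exact absurd hu.1 (not_le.2 h)
    · exact h.trans_le (potential_sub_le hp hE)

theorem prob_thetaLevel_influenced_le (hp : ∀ e ∈ E, p e ≤ 1) (j : V) :
    prob (thetaLevel E p S) (fun c => influenced c S j) ≤ potential E p S j := by
  rw [prob_thetaLevel, levelMeasure, Measure.restrict_apply' measurableSet_Ico]
  have hsub : {u | influenced (scenarioAt E p S u) S j} ∩ Set.Ico 0 1 ⊆
      Set.Ico 0 (potential E p S j) :=
    fun u ⟨hj, hu⟩ => ⟨hu.1, lt_potential_of_influenced hp hu hj⟩
  calc _ ≤ (volume (Set.Ico 0 (potential E p S j))).toReal :=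
        ENNReal.toReal_mono (by simp) (measure_mono hsub)
    _ = potential E p S j := by
        rw [Real.volume_Ico, sub_zero, ENNReal.toReal_ofReal (potential_nonneg hp)]

theorem expInf_thetaLevel_le (hp : ∀ e ∈ E, p e ≤ 1) :
    expInf (thetaLevel E p S) S ≤ ∑ j, potential E p S j := by
  rw [expInf_eq_sum_prob]
  exact Finset.sum_le_sum fun j _ => prob_thetaLevel_influenced_le hp j

end Coupling

/-- let `θ*` attain the minimum of `E_θ[R(c̃, S)]` over `Θ` and let
`i ∈ V \ S` with `max_{γ ∈ Γ(S,i)} L(γ) > 0`. Then for every maximizing path `γ`,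
the `θ*`-probability that at least two (distinct) edges of `γ` are missing from the
random scenario is zero. -/
theorem at_most_one_arc_missing (E : Finset (V × V)) (p : V × V → ℝ)
    (hp : ∀ e ∈ E, 0 ≤ p e ∧ p e ≤ 1) (S : Finset V)
    (θs : Finset (V × V) → ℝ) (hθs : memTheta E p θs)
    (hmin : ∀ θ : Finset (V × V) → ℝ, memTheta E p θ → expInf θs S ≤ expInf θ S)
    (i : V) (hi : i ∉ S)
    (hpos : 0 < sSup {x : ℝ | ∃ γ : List V, IsPathFrom E S i γ ∧ x = L p γ})
    (γ : List V) (hγ : IsPathFrom E S i γ)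
    (hmax : L p γ = sSup {x : ℝ | ∃ γ' : List V, IsPathFrom E S i γ' ∧ x = L p γ'}) :
    prob θs (fun c => ∃ e₁ ∈ pathEdges γ, ∃ e₂ ∈ pathEdges γ,
      e₁ ≠ e₂ ∧ e₁ ∉ c ∧ e₂ ∉ c) = 0 := by
  classical
  have hp1 : ∀ e ∈ E, p e ≤ 1 := fun e he => (hp e he).2
  set q := prob θs (TwoMissing (pathEdges γ))
  have hpotential : potential E p S i ≤ L p γ := by
    rw [potential_of_not_mem hi, hmax]
    exact piStar_le hpos.le fun γ' hγ' => le_csSup (bddAbove_pathWeights hp1 S i) ⟨γ', hγ', rfl⟩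
  have hlower (j : V) :
      potential E p S j + (if j = i then q else 0) ≤ prob θs (fun c => influenced c S j) := by
    split_ifs with hj
    · subst hj; linarith [hθs.L_add_prob_twoMissing_le hγ]
    · simpa using hθs.potential_le_prob S j
  have : ∑ j, potential E p S j + q ≤ ∑ j, potential E p S j := calc
    _ = ∑ j, (potential E p S j + if j = i then q else 0) := by simp [Finset.sum_add_distrib]
    _ ≤ expInf θs S := expInf_eq_sum_prob θs S ▸ Finset.sum_le_sum fun j _ => hlower j
    _ ≤ expInf (thetaLevel E p S) S := hmin _ (memTheta_thetaLevel hp)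
    _ ≤ ∑ j, potential E p S j := expInf_thetaLevel_le hp1
  show q = 0
  linarith [prob_nonneg hθs.1 (TwoMissing (pathEdges γ))]

end CorrIM
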